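/- Let k be a field, V a k-vector space, and φ a finite potent endomorphism of V. If W₁ and W₂ are both admissible subspaces for φ (i.e., each Wᵢ is finite-dimensional, φ(Wᵢ) ⊆ Wᵢ, and there exists nᵢ ≥ 1 with φ^{nᵢ}(V) ⊆ Wᵢ), then the ordinary determinant of the restriction (1+φ)|_{W₁} : W₁ → W₁ equals the ordinary determinant of (1+φ)|_{W₂} : W₂ → W₂. Hence the infinite determinant Det^k_V(1+φ) := det((1+φ)|_W) is well defined, independent of the choice of admissible W. -/

import Mathlib

/-- An endomorphism `φ` of a `k`-vector space `V` is *finite potent* if `φ^n(V)` is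
finite-dimensional for some `n ≥ 1`. -/
def IsFinitePotent {k V : Type*} [Field k] [AddCommGroup V] [Module k V]
    (φ : V →ₗ[k] V) : Prop :=
  ∃ n : ℕ, 1 ≤ n ∧ FiniteDimensional k (LinearMap.range (φ ^ n))

/-!
Both determinants equal the determinant of `1 + φ` on `W₁ ⊔ W₂`. Indeed, if `W ≤ W'` are
`φ`-stable, `W'` is finite-dimensional and `φ ^ n` maps `V` into `W`, then `φ` induces a
nilpotent endomorphism of `W' ⧸ W`; so `1 + φ` is unipotent there, and the block-triangular
factorisation `det((1 + φ)|W') = det((1 + φ)|W) * det((1 + φ)|(W' ⧸ W))` has second factor `1`.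
-/

theorem LinearMap.det_one_add_of_isNilpotent {R M : Type*} [CommRing R] [IsDomain R]
    [AddCommGroup M] [Module R M] [Module.Free R M] [Module.Finite R M]
    {f : Module.End R M} (hf : IsNilpotent f) : (1 + f).det = 1 := by
  have := (-f).eval_charpoly 1
  rw [hf.neg.charpoly_eq_X_pow_finrank, map_one, sub_neg_eq_add] at this
  simpa using this.symm

theorem Submodule.isNilpotent_mapQ_of_range_pow_le {R M : Type*} [Ring R] [AddCommGroup M]
    [Module R M] {f : Module.End R M} {p : Submodule R M} (hp : p ≤ p.comap f) {n : ℕ}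
    (hn : LinearMap.range (f ^ n) ≤ p) : IsNilpotent (p.mapQ p f hp) := by
  refine ⟨n, ?_⟩
  rw [← p.mapQ_pow hp]
  ext x
  simpa using hn (LinearMap.mem_range_self _ x)

theorem LinearMap.det_restrict_one_add_of_range_pow_le {K M : Type*} [Field K]
    [AddCommGroup M] [Module K M] [FiniteDimensional K M] {f : Module.End K M}
    {p : Submodule K M} (hp : p ≤ p.comap f) (hp' : p ≤ p.comap (1 + f)) {n : ℕ}
    (hn : LinearMap.range (f ^ n) ≤ p) : ((1 + f).restrict hp').det = (1 + f).det := by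
  have hq : p.mapQ p (1 + f) hp' = 1 + p.mapQ p f hp := by ext; rfl
  rw [(1 + f).det_eq_det_mul_det p hp', hq,
    det_one_add_of_isNilpotent (p.isNilpotent_mapQ_of_range_pow_le hp hn), mul_one]

theorem LinearMap.det_restrict_restrict {R M : Type*} [CommRing R] [AddCommGroup M]
    [Module R M] {f : Module.End R M} {W W' : Submodule R M} (hle : W ≤ W')
    (hW : W ≤ W.comap f) (hW' : W' ≤ W'.comap f)
    (h : W.comap W'.subtype ≤ (W.comap W'.subtype).comap (f.restrict hW')) :
    ((f.restrict hW').restrict h).det = (f.restrict hW).det := by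
  let e := Submodule.comapSubtypeEquivOfLe hle
  have hconj : f.restrict hW = e.toLinearMap ∘ₗ (f.restrict hW').restrict h ∘ₗ e.symm.toLinearMap :=
    by ext; rfl
  rw [hconj, det_conj]

theorem LinearMap.det_restrict_one_add_eq_of_le {K V : Type*} [Field K] [AddCommGroup V]
    [Module K V] {φ : Module.End K V} {W W' : Submodule K V} [FiniteDimensional K W']
    (hle : W ≤ W') (hW : W ≤ W.comap φ) (hW' : W' ≤ W'.comap φ) (h₁ : W ≤ W.comap (1 + φ))
    (h₁' : W' ≤ W'.comap (1 + φ)) {n : ℕ} (hn : LinearMap.range (φ ^ n) ≤ W) :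
    ((1 + φ).restrict h₁).det = ((1 + φ).restrict h₁').det := by
  set p := W.comap W'.subtype
  have hp : p ≤ p.comap (φ.restrict hW') := fun x hx => hW hx
  have hp₁ : p ≤ p.comap ((1 + φ).restrict h₁') := fun x hx => h₁ hx
  have hpn : LinearMap.range ((φ.restrict hW') ^ n) ≤ p := by
    rintro _ ⟨x, rfl⟩
    rw [Module.End.pow_restrict]
    exact hn (LinearMap.mem_range_self _ (x : V))
  rw [← det_restrict_restrict hle h₁ h₁' hp₁]
  exact det_restrict_one_add_of_range_pow_le hp hp₁ hpn

theorem det_one_add_restrict_eq_of_admissible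
    {k V : Type*} [Field k] [AddCommGroup V] [Module k V]
    (φ : V →ₗ[k] V)
    (W₁ W₂ : Submodule k V)
    (hW₁fin : FiniteDimensional k W₁) (hW₂fin : FiniteDimensional k W₂)
    (hW₁inv : ∀ x ∈ W₁, φ x ∈ W₁) (hW₂inv : ∀ x ∈ W₂, φ x ∈ W₂)
    (n₁ n₂ : ℕ)
    (hr₁ : LinearMap.range (φ ^ n₁) ≤ W₁) (hr₂ : LinearMap.range (φ ^ n₂) ≤ W₂) :
    LinearMap.det ((1 + φ).restrict
        (fun x hx => W₁.add_mem hx (hW₁inv x hx) : ∀ x ∈ W₁, (1 + φ) x ∈ W₁))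
      = LinearMap.det ((1 + φ).restrict
        (fun x hx => W₂.add_mem hx (hW₂inv x hx) : ∀ x ∈ W₂, (1 + φ) x ∈ W₂)) := by
  have hinv : W₁ ⊔ W₂ ≤ (W₁ ⊔ W₂).comap φ :=
    sup_le (fun x hx => Submodule.mem_sup_left (hW₁inv x hx))
      (fun x hx => Submodule.mem_sup_right (hW₂inv x hx))
  have hinv₁ : W₁ ⊔ W₂ ≤ (W₁ ⊔ W₂).comap (1 + φ) := fun x hx => add_mem hx (hinv hx)
  rw [LinearMap.det_restrict_one_add_eq_of_le le_sup_left hW₁inv hinv _ hinv₁ hr₁,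
    LinearMap.det_restrict_one_add_eq_of_le le_sup_right hW₂inv hinv _ hinv₁ hr₂]
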